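/- arXiv:1403.0342 — 2 statements merged into one kernel-verified Lean document; each statement's English description precedes it below -/
import Mathlib

section
/- Let G be a connected graph with at least two vertices. If G is bipartite then every vertex of G is a frontier vertex, i.e. F(G) = V(G); if G is not bipartite then G has no frontier vertices, i.e. F(G) = ∅. -/
/-- An A-trail (alternating trail) in the mixed graph `(V, A)`: a sequence of `k ≥ 1`
pairwise distinct arcs `a 0, …, a (k-1)` of `G` with a vertex sequence
`v 0, …, v k` such that the `i`-th arc is `(v i, v (i+1))` or `(v (i+1), v i)`,
and consecutive arcs alternate in direction. -/
def IsATrail {V : Type*} (A : V → V → Prop) (k : ℕ) (a : ℕ → V × V) (v : ℕ → V) : Prop :=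
  1 ≤ k ∧
  (∀ i, i < k → A (a i).1 (a i).2) ∧
  (∀ i, i < k → ∀ j, j < k → a i = a j → i = j) ∧
  (∀ i, i < k → a i = (v i, v (i + 1)) ∨ a i = (v (i + 1), v i)) ∧
  (∀ i, i + 1 < k → (a i = (v i, v (i + 1)) ↔ a (i + 1) = (v (i + 2), v (i + 1))))

/-- The relation `R` on arcs: `x R y` iff some A-trail has first arc `x` and last arc `y`. -/
def ATrailRel {V : Type*} (A : V → V → Prop) (x y : V × V) : Prop :=
  ∃ k a v, IsATrail A k a v ∧ a 0 = x ∧ a (k - 1) = y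

/-- A frontier vertex: a vertex incident with two arcs lying in different classes of
the equivalence relation `ATrailRel`. -/
def IsFrontier {V : Type*} (A : V → V → Prop) (w : V) : Prop :=
  ∃ x y : V × V, A x.1 x.2 ∧ A y.1 y.2 ∧ (x.1 = w ∨ x.2 = w) ∧ (y.1 = w ∨ y.2 = w) ∧
    ¬ ATrailRel A x y

/-!
A proper 2-colouring is constant on the tails of the arcs of an A-trail, because consecutive
arcs share either their tail or their head; so the two orientations of an edge at `w` are never
related, and every vertex is a frontier vertex.

Conversely, identify the arc `(a, b)` with the edge `s(inl a, inr b)` of the bipartite double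
cover: arcs sharing a tail (head) become edges meeting at a left (right) vertex, and A-trails
become trails. An odd closed walk makes the double cover of a connected graph connected, and in
a connected graph any two edges are the first and last edges of a trail (join them by a path and
drop an end edge the path already uses). Hence all arcs are related and there are no frontier
vertices.
-/

namespace SimpleGraph

variable {W : Type*} {H : SimpleGraph W}

theorem Walk.IsPath.exists_isPath_not_mem_edges {b c : W} {p : H.Walk b c} (hp : p.IsPath)
    (a : W) : ∃ (z z' : W) (q : H.Walk z c), s(z', z) = s(a, b) ∧ q.IsPath ∧
      s(a, b) ∉ q.edges ∧ q.edges ⊆ p.edges := by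
  by_cases hab : s(a, b) ∈ p.edges
  · have hnil : ¬ p.Nil := Walk.edges_eq_nil.not.mp (List.ne_nil_of_mem hab)
    have ha : a = p.snd := hp.eq_snd_of_mem_edges (Sym2.eq_swap ▸ hab)
    have htrail := hp.isTrail
    rw [← p.cons_tail_eq hnil, isTrail_cons] at htrail
    refine ⟨p.snd, b, p.tail, by rw [ha, Sym2.eq_swap], hp.tail, ?_, ?_⟩
    · rw [Sym2.eq_swap, ha]; exact htrail.2
    · rw [Walk.edges_tail]; exact List.tail_subset _
  · exact ⟨b, a, p, rfl, hp, hab, List.Subset.refl _⟩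

theorem Preconnected.exists_isTrail_from_edge_to_edge {a b c d : W} (hH : H.Preconnected)
    (hab : H.Adj a b) (hcd : H.Adj c d) :
    ∃ (u v : W) (p : H.Walk u v), p.IsTrail ∧ ¬ p.Nil ∧
      s(u, p.snd) = s(a, b) ∧ s(p.penultimate, v) = s(c, d) := by
  classical
  by_cases hef : s(a, b) = s(c, d)
  · exact ⟨a, b, .cons hab .nil, by simp, by simp, by simp, by simpa using hef⟩
  obtain ⟨z, z', q, hz, hq, hdc, -⟩ :=
    (hH c b).some.bypass_isPath.exists_isPath_not_mem_edges d
  obtain ⟨y, y', r, hy, hr, hab', hrq⟩ := hq.reverse.exists_isPath_not_mem_edges a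
  have hz' : s(z, z') = s(c, d) := Sym2.eq_swap.trans (hz.trans Sym2.eq_swap)
  have hyy : H.Adj y' y := by rw [← mem_edgeSet, hy]; exact hab
  have hzz : H.Adj z z' := by rw [← mem_edgeSet, hz']; exact hcd
  refine ⟨y', z', .cons hyy (r.concat hzz), ?_, by simp, by simpa using hy, ?_⟩
  · have hcd' : s(c, d) ∉ r.edges := fun h => hdc <| by
      simpa [Sym2.eq_swap] using hrq h
    rw [Walk.isTrail_def, Walk.edges_cons, Walk.edges_concat, hy, hz']
    refine List.nodup_cons.2 ⟨?_, hr.isTrail.edges_nodup.concat hcd'⟩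
    simp [hab', hef]
  · rw [Walk.penultimate_cons_of_not_nil _ _ (by simp [Walk.not_nil_iff_lt_length]),
      Walk.penultimate_concat, hz']

variable {V : Type*} {G : SimpleGraph V}

-- The last two cases are junk: they never occur along an edge of the double cover.
def arcOf : V ⊕ V → V ⊕ V → V × V
  | .inl a, .inr b => (a, b)
  | .inr a, .inl b => (b, a)
  | .inl a, .inl b => (a, b)
  | .inr a, .inr b => (a, b)

theorem adj_arcOf {P Q : V ⊕ V} (h : G.bipartiteDoubleCover.Adj P Q) :
    G.Adj (arcOf P Q).1 (arcOf P Q).2 := by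
  cases P <;> cases Q <;> simp_all [arcOf, adj_comm]

theorem arcOf_eq_iff {P Q : V ⊕ V} (h : G.bipartiteDoubleCover.Adj P Q) {x : V × V} :
    arcOf P Q = x ↔ s(P, Q) = s(.inl x.1, .inr x.2) := by
  obtain ⟨x1, x2⟩ := x
  cases P <;> cases Q <;> simp_all [arcOf, and_comm]

theorem arcOf_eq_or_eq_swap (P Q : V ⊕ V) :
    arcOf P Q = (Sum.elim id id P, Sum.elim id id Q) ∨
      arcOf P Q = (Sum.elim id id Q, Sum.elim id id P) := by
  cases P <;> cases Q <;> simp [arcOf]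

theorem arcOf_eq_iff_arcOf_eq {P Q R : V ⊕ V} (hPQ : G.bipartiteDoubleCover.Adj P Q)
    (hQR : G.bipartiteDoubleCover.Adj Q R) :
    arcOf P Q = (Sum.elim id id P, Sum.elim id id Q) ↔
      arcOf Q R = (Sum.elim id id R, Sum.elim id id Q) := by
  cases P <;> cases Q <;> cases R <;> simp only [bipartiteDoubleCover] at hPQ hQR <;>
    simp [arcOf, hPQ.ne, hPQ.ne.symm, hQR.ne, hQR.ne.symm]

theorem aTrailRel_of_isTrail {P Q : V ⊕ V} {p : G.bipartiteDoubleCover.Walk P Q}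
    (hp : p.IsTrail) (hnil : ¬ p.Nil) :
    ATrailRel G.Adj (arcOf P p.snd) (arcOf p.penultimate Q) := by
  have hadj {i : ℕ} (hi : i < p.length) := p.adj_getVert_succ hi
  refine ⟨p.length, fun i => arcOf (p.getVert i) (p.getVert (i + 1)),
    fun i => Sum.elim id id (p.getVert i), ⟨?_, fun i hi => adj_arcOf (hadj hi), ?_,
    fun i _ => arcOf_eq_or_eq_swap _ _, fun i hi => arcOf_eq_iff_arcOf_eq (hadj (by omega))
    (hadj hi)⟩, by simp only [Walk.getVert_zero], ?_⟩
  · exact Walk.not_nil_iff_lt_length.mp hnil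
  · intro i hi j hj hij
    have hedge : p.edges[i]'(p.length_edges ▸ hi) = p.edges[j]'(p.length_edges ▸ hj) := by
      rw [Walk.getElem_edges, Walk.getElem_edges, ((arcOf_eq_iff (hadj hi)).mp hij),
        ((arcOf_eq_iff (hadj hj)).mp rfl)]
    exact (hp.edges_nodup.getElem_inj_iff).mp hedge
  · beta_reduce
    rw [Nat.sub_add_cancel (Walk.not_nil_iff_lt_length.mp hnil), Walk.getVert_length]

theorem bipartiteDoubleCover_reachable_of_walk {u w : V} (p : G.Walk u w) :
    G.bipartiteDoubleCover.Reachable (.inl u) (if Even p.length then .inl w else .inr w) ∧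
      G.bipartiteDoubleCover.Reachable (.inr u) (if Even p.length then .inr w else .inl w) := by
  induction p with
  | nil => simp
  | @cons u v w h q ih =>
    have hl : G.bipartiteDoubleCover.Adj (.inl u) (.inr v) := h
    have hr : G.bipartiteDoubleCover.Adj (.inr u) (.inl v) := h
    simp only [Walk.length_cons, Nat.even_add_one, ite_not]
    exact ⟨hl.reachable.trans ih.2, hr.reachable.trans ih.1⟩

theorem Preconnected.preconnected_bipartiteDoubleCover (hG : G.Preconnected) {u : V}
    (c : G.Walk u u) (hc : Odd c.length) : G.bipartiteDoubleCover.Preconnected := by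
  suffices h : ∀ P, G.bipartiteDoubleCover.Reachable (.inl u) P from
    fun P Q => (h P).symm.trans (h Q)
  have hboth (w : V) : G.bipartiteDoubleCover.Reachable (.inl u) (.inl w) ∧
      G.bipartiteDoubleCover.Reachable (.inl u) (.inr w) := by
    obtain ⟨q⟩ := hG u w
    have hq := (bipartiteDoubleCover_reachable_of_walk q).1
    have hcq := (bipartiteDoubleCover_reachable_of_walk (c.append q)).1
    have hc' : ¬ Even c.length := Nat.not_even_iff_odd.mpr hc
    by_cases he : Even q.length
    · simp only [he, hc', Walk.length_append, Nat.even_add] at hq hcq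
      exact ⟨hq, hcq⟩
    · simp only [he, hc', Walk.length_append, Nat.even_add] at hq hcq
      exact ⟨hcq, hq⟩
  rintro (w | w)
  exacts [(hboth w).1, (hboth w).2]

theorem exists_odd_loop (h : ¬ ∃ C : V → Bool, ∀ u v, G.Adj u v → C u ≠ C v) :
    ∃ (u : V) (c : G.Walk u u), Odd c.length := by
  by_contra! hodd
  obtain ⟨c⟩ :=
    two_colorable_iff_forall_loop_even.mpr fun u c => Nat.not_odd_iff_even.mp (hodd u c)
  exact h ⟨fun u => finTwoEquiv (c u), fun u v huv => finTwoEquiv.injective.ne (c.valid huv)⟩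

theorem aTrailRel_of_preconnected_bipartiteDoubleCover
    (h : G.bipartiteDoubleCover.Preconnected) {x y : V × V} (hx : G.Adj x.1 x.2) (hy : G.Adj y.1 y.2) : ATrailRel G.Adj x y := by
  have hx' : G.bipartiteDoubleCover.Adj (.inl x.1) (.inr x.2) := hx
  have hy' : G.bipartiteDoubleCover.Adj (.inl y.1) (.inr y.2) := hy
  obtain ⟨P, Q, p, hp, hnil, hfirst, hlast⟩ := h.exists_isTrail_from_edge_to_edge hx' hy'
  have hrel := aTrailRel_of_isTrail hp hnil
  rwa [(arcOf_eq_iff (p.adj_snd hnil)).mpr hfirst,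
    (arcOf_eq_iff (p.adj_penultimate hnil)).mpr hlast] at hrel

end SimpleGraph

section TwoColoring

variable {V : Type*} {A : V → V → Prop} {C : V → Bool}

theorem IsATrail.color_fst_succ (hC : ∀ u v, A u v → C u ≠ C v) {k : ℕ} {a : ℕ → V × V}
    {v : ℕ → V} (h : IsATrail A k a v) {i : ℕ} (hi : i + 1 < k) : C (a (i + 1)).1 = C (a i).1 := by
  obtain ⟨-, hA, -, hform, halt⟩ := h
  have hcol {j : ℕ} (hj : j < k) : C (a j).1 ≠ C (a j).2 := hC _ _ (hA j hj)
  rcases hform i (by omega) with hfwd | hbwd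
  · have hnext := (halt i hi).mp hfwd
    have h1 := hcol (j := i) (by omega)
    have h2 := hcol hi
    rw [hfwd] at h1 ⊢
    rw [hnext] at h2 ⊢
    rw [← Bool.eq_not_iff] at h1 h2
    rw [h1, h2]
  · have hne : a i ≠ (v i, v (i + 1)) := fun hfwd => by
      have h1 := hcol (j := i) (by omega)
      rw [hbwd] at h1
      rw [hbwd, Prod.mk.injEq] at hfwd
      exact h1 (by rw [hfwd.1])
    have hnext : a (i + 1) = (v (i + 1), v (i + 2)) :=
      (hform (i + 1) hi).resolve_right (mt (halt i hi).mpr hne)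
    rw [hbwd, hnext]

theorem IsATrail.color_fst_eq (hC : ∀ u v, A u v → C u ≠ C v) {k : ℕ} {a : ℕ → V × V}
    {v : ℕ → V} (h : IsATrail A k a v) :
    ∀ i < k, C (a i).1 = C (a 0).1
  | 0, _ => rfl
  | i + 1, hi => (h.color_fst_succ hC hi).trans (h.color_fst_eq hC i (by omega))

theorem ATrailRel.color_fst_eq (hC : ∀ u v, A u v → C u ≠ C v) {x y : V × V}
    (h : ATrailRel A x y) : C y.1 = C x.1 := by
  obtain ⟨k, a, v, hT, rfl, rfl⟩ := h
  exact hT.color_fst_eq hC (k - 1) (by have := hT.1; omega)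

end TwoColoring

/-- for a connected graph `G` with at least two vertices: if `G` is
bipartite then every vertex is a frontier vertex, and if `G` is not bipartite then `G`
has no frontier vertices. -/
theorem stmt_10 {V : Type*} (G : SimpleGraph V) (hconn : G.Connected)
    (hV : ∃ u v : V, u ≠ v) :
    ((∃ C : V → Bool, ∀ u v, G.Adj u v → C u ≠ C v) →
      ∀ w : V, IsFrontier (fun s t => G.Adj s t) w) ∧
    (¬ (∃ C : V → Bool, ∀ u v, G.Adj u v → C u ≠ C v) →
      ∀ w : V, ¬ IsFrontier (fun s t => G.Adj s t) w) := by
  constructor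
  · rintro ⟨C, hC⟩ w
    have : Nontrivial V := nontrivial_iff.mpr hV
    obtain ⟨t, hwt⟩ := hconn.preconnected.exists_adj_of_nontrivial w
    exact ⟨(w, t), (t, w), hwt, hwt.symm, .inl rfl, .inr rfl,
      fun h => hC w t hwt (h.color_fst_eq hC).symm⟩
  · rintro hnb w ⟨x, y, hx, hy, -, -, hxy⟩
    obtain ⟨u, c, hc⟩ := SimpleGraph.exists_odd_loop hnb
    exact hxy (SimpleGraph.aTrailRel_of_preconnected_bipartiteDoubleCover
      (hconn.preconnected.preconnected_bipartiteDoubleCover c hc) hx hy)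
end

section
/- Let G be a strongly bipartite digraph with no isolated vertices, i.e. every vertex of G has at least one incident arc but no vertex has both an incoming and an outgoing arc. Then the map ψ which sends a TF-automorphism (α,β) of G to the permutation f of V(G) defined by f(u) = α(u) if u has an outgoing arc and f(u) = β(u) if u has an incoming arc, is well defined, and ψ is a surjective group homomorphism from Aut^TF(G) onto Aut(G). -/
/-- The automorphism group of a mixed graph `(V, A)`, as a subgroup of `Perm V`. -/
def MixedAut {V : Type*} (A : V → V → Prop) : Subgroup (Equiv.Perm V) where
  carrier := {g | ∀ u v, A u v ↔ A (g u) (g v)}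
  one_mem' := by intro u v; simp
  mul_mem' := by
    intro g h hg hh u v
    simpa [Equiv.Perm.mul_apply] using (hh u v).trans (hg (h u) (h v))
  inv_mem' := by
    intro g hg u v
    simpa [Equiv.Perm.coe_inv, Equiv.apply_symm_apply] using (hg (g⁻¹ u) (g⁻¹ v)).symm

/-- The two-fold automorphism group of a mixed graph `(V, A)`, as a subgroup of
`Perm V × Perm V` (with componentwise composition). -/
def TFAut {V : Type*} (A : V → V → Prop) : Subgroup (Equiv.Perm V × Equiv.Perm V) where
  carrier := {p | ∀ u v, A u v ↔ A (p.1 u) (p.2 v)}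
  one_mem' := by intro u v; simp
  mul_mem' := by
    intro p q hp hq u v
    simpa [Prod.fst_mul, Prod.snd_mul, Equiv.Perm.mul_apply] using
      (hq u v).trans (hp (q.1 u) (q.2 v))
  inv_mem' := by
    intro p hp u v
    simpa [Prod.fst_inv, Prod.snd_inv, Equiv.Perm.coe_inv, Equiv.apply_symm_apply] using
      (hp (p.1⁻¹ u) (p.2⁻¹ v)).symm

/-!
Strong bipartiteness and the absence of isolated vertices split `V` into sources and sinks.
A TF-automorphism `(α, β)` sends sources to sources through `α` and sinks to sinks through `β`,
so gluing `α` on the sources to `β` on the sinks commutes with composition, and an arc, which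
always runs from a source to a sink, is moved by the glued map exactly as by `(α, β)`.
Conversely an automorphism `g` gives the TF-automorphism `(g, g)`, which glues back to `g`.
-/

section

open Equiv

variable {V : Type*} {A : V → V → Prop}

def IsStronglyBipartite (A : V → V → Prop) : Prop :=
  ∀ w, ¬ ((∃ x, A x w) ∧ (∃ y, A w y))

def HasNoIsolatedVertex (A : V → V → Prop) : Prop :=
  ∀ w, (∃ x, A x w) ∨ (∃ y, A w y)

namespace TFAut

theorem exists_adj_fst {p : Perm V × Perm V} (hp : p ∈ TFAut A) {u : V}
    (h : ∃ y, A u y) : ∃ y, A (p.1 u) y :=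
  let ⟨y, hy⟩ := h; ⟨p.2 y, (hp u y).mp hy⟩

theorem exists_adj_snd {p : Perm V × Perm V} (hp : p ∈ TFAut A) {u : V}
    (h : ∃ x, A x u) : ∃ x, A x (p.2 u) :=
  let ⟨x, hx⟩ := h; ⟨p.1 x, (hp x u).mp hx⟩

theorem not_exists_adj_snd (hsb : IsStronglyBipartite A) (hni : HasNoIsolatedVertex A)
    {p : Perm V × Perm V} (hp : p ∈ TFAut A) {u : V} (h : ¬ ∃ y, A u y) :
    ¬ ∃ y, A (p.2 u) y :=
  fun hout => hsb _ ⟨exists_adj_snd hp ((hni u).resolve_right h), hout⟩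

section Glue

open Classical

/-- The map `ψ` of the paper. -/
noncomputable def glue (A : V → V → Prop) (p : Perm V × Perm V) : V → V :=
  {u | ∃ y, A u y}.piecewise p.1 p.2

theorem glue_eq_fst (p : Perm V × Perm V) {u : V} (h : ∃ y, A u y) :
    glue A p u = p.1 u :=
  Set.piecewise_eq_of_mem _ _ _ h

theorem glue_eq_snd_of_not_exists (p : Perm V × Perm V) {u : V} (h : ¬ ∃ y, A u y) :
    glue A p u = p.2 u :=
  Set.piecewise_eq_of_notMem _ _ _ h

theorem glue_one : glue A 1 = id :=
  Set.piecewise_same _ _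

theorem glue_diag (g : Perm V) : glue A (g, g) = g :=
  Set.piecewise_same _ _

end Glue

theorem glue_eq_snd (hsb : IsStronglyBipartite A) (p : Perm V × Perm V) {u : V}
    (h : ∃ x, A x u) : glue A p u = p.2 u :=
  glue_eq_snd_of_not_exists p fun hout => hsb u ⟨h, hout⟩

theorem glue_mul (hsb : IsStronglyBipartite A) (hni : HasNoIsolatedVertex A)
    (p : Perm V × Perm V) {q : Perm V × Perm V} (hq : q ∈ TFAut A) (u : V) :
    glue A (p * q) u = glue A p (glue A q u) := by
  by_cases h : ∃ y, A u y
  · rw [glue_eq_fst _ h, glue_eq_fst _ h, glue_eq_fst _ (exists_adj_fst hq h)]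
    rfl
  · rw [glue_eq_snd_of_not_exists _ h, glue_eq_snd_of_not_exists _ h,
      glue_eq_snd_of_not_exists _ (not_exists_adj_snd hsb hni hq h)]
    rfl

theorem exists_adj_glue_iff (hsb : IsStronglyBipartite A) (hni : HasNoIsolatedVertex A)
    {p : Perm V × Perm V} (hp : p ∈ TFAut A) (u : V) :
    (∃ y, A (glue A p u) y) ↔ ∃ y, A u y := by
  by_cases h : ∃ y, A u y
  · rw [glue_eq_fst _ h]
    exact iff_of_true (exists_adj_fst hp h) h
  · rw [glue_eq_snd_of_not_exists _ h]
    exact iff_of_false (not_exists_adj_snd hsb hni hp h) h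

theorem adj_glue_iff (hsb : IsStronglyBipartite A) (hni : HasNoIsolatedVertex A)
    {p : Perm V × Perm V} (hp : p ∈ TFAut A) (u v : V) :
    A (glue A p u) (glue A p v) ↔ A u v := by
  have hsource_sink : (∃ y, A u y) → (¬ ∃ y, A v y) →
      (A (glue A p u) (glue A p v) ↔ A u v) := fun hu hv => by
    rw [glue_eq_fst _ hu, glue_eq_snd_of_not_exists _ hv]
    exact (hp u v).symm
  constructor
  · intro huv
    have hu := (exists_adj_glue_iff hsb hni hp u).mp ⟨_, huv⟩
    have hv : ¬ ∃ y, A v y := fun hv =>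
      hsb _ ⟨⟨_, huv⟩, (exists_adj_glue_iff hsb hni hp v).mpr hv⟩
    exact (hsource_sink hu hv).mp huv
  · intro huv
    exact (hsource_sink ⟨v, huv⟩ fun hv => hsb v ⟨⟨u, huv⟩, hv⟩).mpr huv

noncomputable def toEnd (hsb : IsStronglyBipartite A) (hni : HasNoIsolatedVertex A) :
    TFAut A →* Function.End V where
  toFun p := glue A p
  map_one' := glue_one
  map_mul' p q := funext (glue_mul hsb hni p q.2)

-- A monoid hom out of a group lands in the units `(Function.End V)ˣ ≃* Perm V`.
noncomputable def toPerm (hsb : IsStronglyBipartite A) (hni : HasNoIsolatedVertex A) :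
    TFAut A →* Perm V :=
  Perm.equivUnitsEnd.symm.toMonoidHom.comp (toEnd hsb hni).toHomUnits

theorem range_toPerm (hsb : IsStronglyBipartite A) (hni : HasNoIsolatedVertex A) :
    (toPerm hsb hni).range = MixedAut A := by
  ext g
  constructor
  · rintro ⟨p, rfl⟩
    exact fun u v => (adj_glue_iff hsb hni p.2 u v).symm
  · intro hg
    exact ⟨⟨(g, g), hg⟩, Perm.ext fun u => congrFun (glue_diag g) u⟩

end TFAut

end

/-- for a strongly bipartite digraph `G` with no isolated vertices, the
map `ψ` sending a TF-automorphism `(α, β)` to the permutation `f` with `f u = α u` on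
vertices with an outgoing arc and `f u = β u` on vertices with an incoming arc is well
defined, and is a surjective group homomorphism from `Aut^TF(G)` onto `Aut(G)`. -/
theorem stmt_17 {V : Type*} (A : V → V → Prop)
    (hsb : ∀ w, ¬ ((∃ x, A x w) ∧ (∃ y, A w y)))
    (hni : ∀ w, (∃ x, A x w) ∨ (∃ y, A w y)) :
    ∃ ψ : TFAut A →* Equiv.Perm V,
      (∀ p : TFAut A, ∀ u : V,
        ((∃ y, A u y) → ψ p u = (p : Equiv.Perm V × Equiv.Perm V).1 u) ∧
        ((∃ x, A x u) → ψ p u = (p : Equiv.Perm V × Equiv.Perm V).2 u)) ∧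
      ψ.range = MixedAut A :=
  ⟨TFAut.toPerm hsb hni,
    fun _ _ => ⟨TFAut.glue_eq_fst _, TFAut.glue_eq_snd hsb _⟩,
    TFAut.range_toPerm hsb hni⟩
end
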